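/- arXiv:1606.00639 — 2 statements merged into one kernel-verified Lean document; each statement's English description precedes it below -/
import Mathlib

section
/- Shift recursion for the law of the conserved quantity (ASEP case of Corollary 5.4): for every j, n ∈ ℤ, the families (η ↦ w^c(η)) over H^{n−j} and over H^n are summable and ∑_{η ∈ H^{n−j}} w^c(η) = (q/p)^{(j² − j)/2 − n·j} · e^{c·j} · ∑_{η ∈ H^n} w^c(η). -/
/- ASEP configurations are functions `η : ℤ → {0,1}`, encoded as `η : ℤ → ℕ` with
values at most `1`. Throughout, `p ∈ (1/2, 1)` is the right jump rate, `q = 1 - p`,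
and `c ∈ ℝ` parametrizes the blocking measure. -/

/-- `N_p(η) = ∑_{i ≤ 0} η_i`. -/
noncomputable def exNp (η : ℤ → ℕ) : ℕ := ∑ᶠ m ∈ {m : ℤ | m ≤ 0}, η m

/-- `N_h(η) = ∑_{i ≥ 1} (1 - η_i)`. -/
noncomputable def exNh (η : ℤ → ℕ) : ℕ := ∑ᶠ m ∈ {m : ℤ | 1 ≤ m}, (1 - η m)

/-- Membership in `H`: a `{0,1}`-valued configuration with `N_p(η) < ∞` and `N_h(η) < ∞`. -/
def memH (η : ℤ → ℕ) : Prop :=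
  (∀ m, η m ≤ 1) ∧ {m : ℤ | m ≤ 0 ∧ η m = 1}.Finite ∧ {m : ℤ | 1 ≤ m ∧ η m = 0}.Finite

/-- The conserved quantity `N(η) = N_h(η) - N_p(η)`. -/
noncomputable def exN (η : ℤ → ℕ) : ℤ := (exNh η : ℤ) - (exNp η : ℤ)

/-- The Bernoulli parameter `ρ_i = e^c (p/q)^i / (1 + e^c (p/q)^i)`, with `q = 1 - p`. -/
noncomputable def rho (p c : ℝ) (i : ℤ) : ℝ :=
  Real.exp c * (p / (1 - p)) ^ i / (1 + Real.exp c * (p / (1 - p)) ^ i)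

/-- The `i`-th factor of the blocking weight: `ρ_i` if `η_i = 1`, else `1 - ρ_i`. -/
noncomputable def wFactor (p c : ℝ) (η : ℤ → ℕ) (i : ℤ) : ℝ :=
  if η i = 1 then rho p c i else 1 - rho p c i

/-- The blocking weight `w^c(η) = ∏_{i ∈ ℤ} (ρ_i if η_i = 1 else 1 - ρ_i)`. -/
noncomputable def wBlock (p c : ℝ) (η : ℤ → ℕ) : ℝ := ∏' i : ℤ, wFactor p c η i

/-! Write `t_i = c + i log (p/q)`, so that `ρ_i = e^{t_i} / (1 + e^{t_i})`. Measured against the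
step configuration `1_{i ≥ 1}`, each factor of `w^c(η)` splits as `(1 + e^{∓t_i})⁻¹ · e^{d_i t_i}`
with `d = η - 1_{i ≥ 1}`, which is finitely supported on `H`. Hence
`w^c(η) = Z · exp (∑ d_i t_i)` with a constant `Z`, and `exp (∑ d_i t_i)` is the product of the
geometrically decaying weights `e^{∓t_i}` over the support of `d`, which gives summability.
The shift `η ↦ η(· + 1)` maps `H^n` bijectively onto `H^{n-1}` and adds exactly `t_n` to
`∑ d_i t_i`; iterating it `j` times produces the quadratic exponent. -/

open Real Function

lemma zpow_eq_exp_mul_log {x : ℝ} (hx : 0 < x) (i : ℤ) : x ^ i = exp (i * log x) := by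
  rw [← rpow_intCast, rpow_def_of_pos hx, mul_comm]

lemma exp_finsum {α : Type*} {f : α → ℝ} (hf : (support f).Finite) :
    exp (∑ᶠ i, f i) = ∏ᶠ i, exp (f i) := by
  rw [finsum_eq_sum_of_support_subset f hf.coe_toFinset.ge, exp_sum,
    finprod_eq_prod_of_mulSupport_subset _ (s := hf.toFinset)]
  intro i hi
  simpa using hi

lemma support_intCast_mul_subset {α : Type*} (a : α → ℤ) (t : α → ℝ) :
    support (fun i => (a i : ℝ) * t i) ⊆ support a := fun i hi h => hi (by simp [h])

lemma multipliable_inv_one_add {ι : Type*} {f : ι → ℝ} (hf0 : ∀ i, 0 ≤ f i) (hf : Summable f) :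
    Multipliable fun i => (1 + f i)⁻¹ := by
  have h : ∀ i, (1 + f i)⁻¹ = 1 + -(f i / (1 + f i)) := fun i => by
    have := hf0 i
    field_simp
    ring
  simp_rw [h]
  refine Real.multipliable_one_add_of_summable (hf.of_norm_bounded fun i => ?_)
  have := hf0 i
  rw [norm_neg, Real.norm_of_nonneg (by positivity)]
  exact div_le_self this (by linarith)

lemma finsum_comp_add_one {M : Type*} [AddCommMonoid M] (f : ℤ → M) :
    ∑ᶠ i, f (i + 1) = ∑ᶠ i, f i :=
  finsum_comp_equiv (Equiv.addRight 1)

lemma finite_support_comp_add_one {M : Type*} [Zero M] {f : ℤ → M} (hf : (support f).Finite) :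
    (support fun i => f (i + 1)).Finite :=
  hf.preimage (Equiv.addRight 1).injective.injOn

lemma eq_exp_mul_of_forall_sub_one {Z : ℤ → ℝ} {a b : ℝ}
    (h : ∀ m, Z (m - 1) = exp (a + m * b) * Z m) (n j : ℤ) :
    Z (n - j) = exp (a * j + b * (n * j - (j ^ 2 - j) / 2)) * Z n := by
  induction j using Int.induction_on with
  | zero => simp
  | succ k ih =>
    rw [← sub_sub, h, ih, ← mul_assoc, ← exp_add]
    congr 2
    push_cast
    ring
  | pred k ih =>
    have hk := h (n - -k + 1)
    rw [add_sub_cancel_right] at hk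
    rw [show n - (-k - 1) = n - -k + 1 by ring]
    apply mul_left_cancel₀ (exp_ne_zero (a + ((n - -k + 1 : ℤ) : ℝ) * b))
    rw [← hk, ih, ← mul_assoc, ← exp_add]
    congr 2
    push_cast
    ring

noncomputable def logOdds (p c : ℝ) (i : ℤ) : ℝ := c + i * log (p / (1 - p))

def stepConfig (i : ℤ) : ℕ := if 1 ≤ i then 1 else 0

def excess (η : ℤ → ℕ) (i : ℤ) : ℤ := η i - stepConfig i

noncomputable def flipWeight (p c : ℝ) (i : ℤ) : ℝ :=
  exp (if 1 ≤ i then -logOdds p c i else logOdds p c i)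

noncomputable def energy (p c : ℝ) (η : ℤ → ℕ) : ℝ := ∑ᶠ i, (excess η i : ℝ) * logOdds p c i

section weights

variable {p c : ℝ}

lemma rho_eq_logistic (hp0 : 0 < p) (hp1 : p < 1) (i : ℤ) :
    rho p c i = exp (logOdds p c i) / (1 + exp (logOdds p c i)) := by
  rw [rho, logOdds, exp_add, ← zpow_eq_exp_mul_log (div_pos hp0 (by linarith))]

lemma wFactor_eq (hp0 : 0 < p) (hp1 : p < 1) {η : ℤ → ℕ} {i : ℤ} (hη : η i ≤ 1) :
    wFactor p c η i = (1 + flipWeight p c i)⁻¹ * exp (excess η i * logOdds p c i) := by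
  have := exp_pos (logOdds p c i)
  rw [wFactor, rho_eq_logistic hp0 hp1, flipWeight, excess, stepConfig]
  interval_cases η i <;> by_cases hi : 1 ≤ i <;> simp [hi, exp_neg] <;> field_simp <;> ring

lemma log_div_one_sub_pos (hp : 1 / 2 < p) (hp1 : p < 1) : 0 < log (p / (1 - p)) :=
  log_pos ((one_lt_div (by linarith)).2 (by linarith))

lemma flipWeight_pos (i : ℤ) : 0 < flipWeight p c i := exp_pos _

lemma flipWeight_le (hp : 1 / 2 < p) (hp1 : p < 1) (i : ℤ) :
    flipWeight p c i ≤ exp (|c| + |(i : ℝ)| * -log (p / (1 - p))) := by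
  have hL := log_div_one_sub_pos hp hp1
  rw [flipWeight, logOdds]
  gcongr
  split_ifs with hi
  · have : (1 : ℝ) ≤ i := by exact_mod_cast hi
    rw [abs_of_pos (a := (i : ℝ)) (by linarith)]
    nlinarith [neg_abs_le c]
  · have : (i : ℝ) ≤ 0 := by exact_mod_cast (by omega : i ≤ 0)
    rw [abs_of_nonpos (a := (i : ℝ)) this]
    nlinarith [le_abs_self c]

lemma summable_flipWeight (hp : 1 / 2 < p) (hp1 : p < 1) : Summable (flipWeight p c) := by
  have hgeom : Summable fun n : ℕ => exp (|c| + |((n : ℤ) : ℝ)| * -log (p / (1 - p))) := by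
    simp_rw [Int.cast_natCast, Nat.abs_cast, exp_add]
    exact (Real.summable_exp_nat_mul_iff.2 (neg_lt_zero.2 (log_div_one_sub_pos hp hp1))).mul_left _
  refine Summable.of_nat_of_neg
    (hgeom.of_nonneg_of_le (fun n => (flipWeight_pos _).le) fun n => flipWeight_le hp hp1 _)
    (hgeom.of_nonneg_of_le (fun n => (flipWeight_pos _).le) fun n => ?_)
  simpa only [Int.cast_neg, abs_neg] using flipWeight_le (c := c) hp hp1 (-n)

end weights

section excess

variable {η η' : ℤ → ℕ}

lemma support_excess (hη : ∀ m, η m ≤ 1) :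
    support (excess η) = {m | m ≤ 0 ∧ η m = 1} ∪ {m | 1 ≤ m ∧ η m = 0} := by
  ext m
  have := hη m
  by_cases hm : 1 ≤ m <;> simp [excess, stepConfig, hm] <;> omega

lemma memH_iff : memH η ↔ (∀ m, η m ≤ 1) ∧ (support (excess η)).Finite := by
  refine ⟨fun hη => ⟨hη.1, ?_⟩, fun ⟨hη, hfin⟩ => ⟨hη, ?_⟩⟩
  · rw [support_excess hη.1]
    exact hη.2.1.union hη.2.2
  · rwa [support_excess hη, Set.finite_union] at hfin

lemma eq_of_support_excess_eq (hη : ∀ m, η m ≤ 1) (hη' : ∀ m, η' m ≤ 1)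
    (h : support (excess η) = support (excess η')) : η = η' := by
  funext m
  have hm := Set.ext_iff.1 h m
  have := hη m
  have := hη' m
  by_cases h1 : 1 ≤ m <;> simp [excess, stepConfig, h1] at hm <;> omega

lemma exN_eq_neg_finsum_excess (hη : memH η) : exN η = -∑ᶠ i, excess η i := by
  obtain ⟨hle, hfin⟩ := memH_iff.1 hη
  have hsub {f : ℤ → ℕ} (hf : ∀ m, f m ≠ 0 → excess η m ≠ 0) :
      support f ⊆ hfin.toFinset := fun m hm => by simpa using hf m hm
  rw [exN, exNh, exNp, finsum_mem_def, finsum_mem_def,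
    finsum_eq_sum_of_support_subset _ (hsub fun m hm => ?_),
    finsum_eq_sum_of_support_subset _ (hsub fun m hm => ?_),
    finsum_eq_sum_of_support_subset _ hfin.coe_toFinset.ge]
  · push_cast
    rw [← Finset.sum_sub_distrib, ← Finset.sum_neg_distrib]
    refine Finset.sum_congr rfl fun m _ => ?_
    have := hle m
    by_cases h1 : 1 ≤ m <;> simp [Set.indicator, excess, stepConfig, h1] <;> omega
  all_goals
    have := hle m
    by_cases h1 : 1 ≤ m <;> simp_all [Set.indicator, excess, stepConfig] <;> omega

end excess

section factorization

variable {p c : ℝ} {η : ℤ → ℕ}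

lemma exp_excess_mul_logOdds {m : ℤ} (hle : η m ≤ 1) (hm : excess η m ≠ 0) :
    exp (excess η m * logOdds p c m) = flipWeight p c m := by
  have h : excess η m = if 1 ≤ m then -1 else 1 := by
    unfold excess stepConfig at *
    split_ifs at * <;> omega
  rw [flipWeight, h]
  split_ifs <;> simp

lemma exp_energy_eq_prod (hη : memH η) :
    exp (energy p c η) = ∏ m ∈ (memH_iff.1 hη).2.toFinset, flipWeight p c m := by
  rw [energy, finsum_eq_sum_of_support_subset _
    ((support_intCast_mul_subset _ _).trans (memH_iff.1 hη).2.coe_toFinset.ge), exp_sum]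
  exact Finset.prod_congr rfl fun m hm =>
    exp_excess_mul_logOdds (hη.1 m) (by simpa using hm)

lemma wBlock_eq_mul_exp_energy (hp : 1 / 2 < p) (hp1 : p < 1) (hη : memH η) :
    wBlock p c η = (∏' i, (1 + flipWeight p c i)⁻¹) * exp (energy p c η) := by
  have hfin : (support fun i => (excess η i : ℝ) * logOdds p c i).Finite :=
    (memH_iff.1 hη).2.subset (support_intCast_mul_subset _ _)
  have hmul : HasFiniteMulSupport fun i => exp ((excess η i : ℝ) * logOdds p c i) := by
    refine hfin.subset fun i hi h => hi ?_
    simp only at h ⊢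
    rw [h, exp_zero]
  rw [wBlock, tprod_congr fun i => wFactor_eq (by linarith) hp1 (hη.1 i),
    Multipliable.tprod_mul (multipliable_inv_one_add (fun i => (flipWeight_pos i).le)
      (summable_flipWeight hp hp1)) (multipliable_of_hasFiniteMulSupport hmul),
    tprod_eq_finprod hmul, energy, exp_finsum hfin]

lemma summable_wBlock_level (hp : 1 / 2 < p) (hp1 : p < 1) (n : ℤ) :
    Summable fun η : {η : ℤ → ℕ // memH η ∧ exN η = n} => wBlock p c η.1 := by
  have hinj : Injective fun η : {η : ℤ → ℕ // memH η ∧ exN η = n} =>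
      (memH_iff.1 η.2.1).2.toFinset := fun η η' h =>
    Subtype.ext (eq_of_support_excess_eq η.2.1.1 η'.2.1.1 (by simpa using h))
  refine (((summable_finsetProd_of_summable_nonneg (fun i => (flipWeight_pos i).le)
    (summable_flipWeight (c := c) hp hp1)).comp_injective hinj).mul_left
      (∏' i, (1 + flipWeight p c i)⁻¹)).congr fun η => ?_
  simp only [comp_apply, wBlock_eq_mul_exp_energy hp hp1 η.2.1, exp_energy_eq_prod η.2.1]

end factorization

def shiftEquiv : (ℤ → ℕ) ≃ (ℤ → ℕ) := (Equiv.subRight (1 : ℤ)).arrowCongr (Equiv.refl ℕ)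

section shift

variable {p c : ℝ} {η : ℤ → ℕ}

@[simp]
lemma shiftEquiv_apply (η : ℤ → ℕ) (i : ℤ) : shiftEquiv η i = η (i + 1) := rfl

lemma excess_shiftEquiv (η : ℤ → ℕ) (i : ℤ) :
    excess (shiftEquiv η) i = excess η (i + 1) + if i = 0 then 1 else 0 := by
  simp only [excess, stepConfig, shiftEquiv_apply]
  split_ifs <;> omega

lemma memH_shiftEquiv_iff : memH (shiftEquiv η) ↔ memH η := by
  have h1 : support (excess (shiftEquiv η)) ⊆ insert 0 ((· + 1) ⁻¹' support (excess η)) :=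
    fun i hi => by by_cases h : i = 0 <;> simp_all [excess_shiftEquiv]
  have h2 : (· + 1) ⁻¹' support (excess η) ⊆ insert 0 (support (excess (shiftEquiv η))) :=
    fun i hi => by by_cases h : i = 0 <;> simp_all [excess_shiftEquiv]
  simp only [memH_iff, shiftEquiv_apply]
  refine and_congr ⟨fun h m => by simpa using h (m - 1), fun h m => h _⟩
    ⟨fun hfin => ?_, fun hfin => ?_⟩
  · exact ((hfin.insert 0).subset h2).of_preimage (Equiv.addRight (1 : ℤ)).surjective
  · exact ((finite_support_comp_add_one hfin).insert 0).subset h1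

lemma finsum_excess_shiftEquiv (hη : memH η) :
    ∑ᶠ i, excess (shiftEquiv η) i = ∑ᶠ i, excess η i + 1 := by
  have hfin := (memH_iff.1 hη).2
  simp_rw [excess_shiftEquiv]
  rw [finsum_add_distrib (finite_support_comp_add_one hfin)
      ((Set.finite_singleton 0).subset fun i hi => by simpa using hi),
    finsum_comp_add_one (excess η), finsum_eq_single _ 0 fun i hi => if_neg hi, if_pos rfl]

lemma exN_shiftEquiv (hη : memH η) : exN (shiftEquiv η) = exN η - 1 := by
  rw [exN_eq_neg_finsum_excess (memH_shiftEquiv_iff.2 hη), exN_eq_neg_finsum_excess hη,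
    finsum_excess_shiftEquiv hη]
  ring

lemma energy_shiftEquiv (hη : memH η) :
    energy p c (shiftEquiv η) = energy p c η + logOdds p c (exN η) := by
  have hfin := (memH_iff.1 hη).2
  set L := log (p / (1 - p))
  set g : ℤ → ℝ := fun i => (excess η i : ℝ) * logOdds p c i - excess η i * L
  have hterm : ∀ i, (excess (shiftEquiv η) i : ℝ) * logOdds p c i =
      g (i + 1) + if i = 0 then c else 0 := fun i => by
    rw [excess_shiftEquiv]
    split_ifs with h <;> simp [g, h, logOdds, L] <;> ring
  have hA := hfin.subset (support_intCast_mul_subset (excess η) (logOdds p c))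
  have hB := hfin.subset (support_intCast_mul_subset (excess η) fun _ => L)
  have hcast : ((∑ᶠ i, excess η i : ℤ) : ℝ) = ∑ᶠ i, (excess η i : ℝ) :=
    (Int.castAddHom ℝ).map_finsum hfin
  rw [energy, energy, finsum_congr hterm,
    finsum_add_distrib (finite_support_comp_add_one ((hA.union hB).subset (support_sub _ _)))
      ((Set.finite_singleton 0).subset fun i hi => by simp_all),
    finsum_comp_add_one g, finsum_sub_distrib hA hB, ← finsum_mul,
    finsum_eq_single _ 0 fun i hi => if_neg hi, if_pos rfl, exN_eq_neg_finsum_excess hη,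
    logOdds, Int.cast_neg, hcast]
  ring

lemma wBlock_shiftEquiv (hp : 1 / 2 < p) (hp1 : p < 1) (hη : memH η) :
    wBlock p c (shiftEquiv η) = exp (logOdds p c (exN η)) * wBlock p c η := by
  rw [wBlock_eq_mul_exp_energy hp hp1 (memH_shiftEquiv_iff.2 hη),
    wBlock_eq_mul_exp_energy hp hp1 hη, energy_shiftEquiv hη, exp_add]
  ring

end shift

def levelShiftEquiv (n : ℤ) :
    {η : ℤ → ℕ // memH η ∧ exN η = n} ≃ {η : ℤ → ℕ // memH η ∧ exN η = n - 1} :=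
  shiftEquiv.subtypeEquiv fun η => by
    rw [memH_shiftEquiv_iff]
    exact and_congr_right fun hη => by rw [exN_shiftEquiv hη, sub_left_inj]

noncomputable def levelSum (p c : ℝ) (n : ℤ) : ℝ :=
  ∑' η : {η : ℤ → ℕ // memH η ∧ exN η = n}, wBlock p c η.1

section levelSum

variable {p c : ℝ}

lemma levelSum_sub_one (hp : 1 / 2 < p) (hp1 : p < 1) (m : ℤ) :
    levelSum p c (m - 1) = exp (logOdds p c m) * levelSum p c m := by
  rw [levelSum, ← (levelShiftEquiv m).tsum_eq, levelSum, ← tsum_mul_left]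
  refine tsum_congr fun ⟨η, hη, hm⟩ => ?_
  subst hm
  exact wBlock_shiftEquiv hp hp1 hη

lemma levelSum_sub (hp : 1 / 2 < p) (hp1 : p < 1) (n j : ℤ) :
    levelSum p c (n - j) =
      exp (c * j + log (p / (1 - p)) * (n * j - (j ^ 2 - j) / 2)) * levelSum p c n :=
  eq_exp_mul_of_forall_sub_one (levelSum_sub_one hp hp1) n j

end levelSum

/-- Shift recursion for the law of the conserved quantity (ASEP case of Corollary 5.4):
for every `j, n ∈ ℤ`, the blocking weights are summable over `H^{n-j}` and over `H^n`, and
`∑_{η ∈ H^{n-j}} w^c(η) = (q/p)^{(j² - j)/2 - n·j} · e^{c·j} · ∑_{η ∈ H^n} w^c(η)`. -/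
theorem wBlock_sum_shift (p c : ℝ) (hp : 1 / 2 < p) (hp1 : p < 1) (j n : ℤ) :
    Summable (fun η : {η : ℤ → ℕ // memH η ∧ exN η = n - j} => wBlock p c η.1) ∧
    Summable (fun η : {η : ℤ → ℕ // memH η ∧ exN η = n} => wBlock p c η.1) ∧
    ∑' η : {η : ℤ → ℕ // memH η ∧ exN η = n - j}, wBlock p c η.1 =
      ((1 - p) / p) ^ ((j ^ 2 - j) / 2 - n * j) * Real.exp (c * j) *
        ∑' η : {η : ℤ → ℕ // memH η ∧ exN η = n}, wBlock p c η.1 := by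
  refine ⟨summable_wBlock_level hp hp1 _, summable_wBlock_level hp hp1 _, ?_⟩
  have hdvd : (2 : ℤ) ∣ j ^ 2 - j := by
    rw [sq, ← mul_sub_one]
    exact (Int.even_mul_pred_self j).two_dvd
  have hcoef : ((1 - p) / p) ^ ((j ^ 2 - j) / 2 - n * j) * exp (c * j) =
      exp (c * j + log (p / (1 - p)) * (n * j - (j ^ 2 - j) / 2)) := by
    rw [zpow_eq_exp_mul_log (div_pos (by linarith) (by linarith)), ← exp_add, ← inv_div, log_inv,
      Int.cast_sub, Int.cast_div hdvd (by norm_num)]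
    push_cast
    congr 1
    ring
  rw [hcoef]
  exact levelSum_sub hp hp1 n j
end

section
/- Shift invariance of the conditioned blocking measures (Corollary 5.5): for every n, j ∈ ℤ and every z ∈ Ω with N(z) = n, the shifted configuration τ^j z lies in Ω with N(τ^j z) = n − j(ω^max − ω^min), and ν^{n − j(ω^max − ω^min)}(τ^j z) = ν^n(z), where ν^m(y) := μ^c(y) / ∑_{x : N(x) = m} μ^c(x) for y with N(y) = m. -/
/- Configurations `z : ℤ → {ω^min, …, ω^max}` of a misanthrope-type process, with
`z_i = ω^min` for all but finitely many `i ≤ 0` and `z_i = ω^max` for all but finitely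
many `i ≥ 1`. -/

/-- Membership in the state space `Ω`. -/
def inOmegaGen (ωmin ωmax : ℤ) (z : ℤ → ℤ) : Prop :=
  (∀ i, ωmin ≤ z i ∧ z i ≤ ωmax) ∧
    {i : ℤ | i ≤ 0 ∧ z i ≠ ωmin}.Finite ∧ {i : ℤ | 1 ≤ i ∧ z i ≠ ωmax}.Finite

/-- The conserved quantity `N(z) = ∑_{i ≥ 1} (ω^max - z_i) - ∑_{i ≤ 0} (z_i - ω^min)`. -/
noncomputable def Ngen (ωmin ωmax : ℤ) (z : ℤ → ℤ) : ℤ :=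
  (∑ᶠ i ∈ {i : ℤ | 1 ≤ i}, (ωmax - z i)) - ∑ᶠ i ∈ {i : ℤ | i ≤ 0}, (z i - ωmin)

/-- The single-site marginal `μ^θ(x) = (e^{θx}/g(x)) / ∑_{y=ω^min}^{ω^max} e^{θy}/g(y)`. -/
noncomputable def muTheta (g : ℤ → ℝ) (ωmin ωmax : ℤ) (θ : ℝ) (x : ℤ) : ℝ :=
  (Real.exp (θ * x) / g x) / ∑ y ∈ Finset.Icc ωmin ωmax, Real.exp (θ * y) / g y

/-- The product blocking weight `μ^c(z) = ∏_{i ∈ ℤ} μ^{θ_i}(z_i)` with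
`θ_i = c + i · ln(p/q)`, `q = 1 - p`. -/
noncomputable def muC (g : ℤ → ℝ) (ωmin ωmax : ℤ) (p c : ℝ) (z : ℤ → ℤ) : ℝ :=
  ∏' i : ℤ, muTheta g ωmin ωmax (c + i * Real.log (p / (1 - p))) (z i)

/-
Shifting a configuration by `j` reindexes the product `μ^c`, which turns it into `μ^{c'}` with
`c' = c - j ln(p/q)`, and lowers `N` by `j (ω^max - ω^min)`. Changing `c` to `c'` multiplies
`μ^c` by the same factor on every sector `{N = n}`: relative to the ground state
`ω_i` (`ω^min` on `i ≤ 0`, `ω^max` on `i ≥ 1`), whose weight is a convergent product with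
positive value because `|log μ^{θ_i}(ω_i)|` decays geometrically in `|i|`, a configuration
differs at finitely many sites, and the ratio `μ^{θ_i}(z_i) / μ^{θ_i}(ω_i)` changes by
`e^{(c' - c)(z_i - ω_i)}`. These exponents add up to `-(c' - c) N(z)`. So the numerator and
the normalising sum pick up the same factor.
-/

def groundConfig (ωmin ωmax : ℤ) (i : ℤ) : ℤ := if i ≤ 0 then ωmin else ωmax

section Combinatorics

variable {ωmin ωmax : ℤ} {z : ℤ → ℤ}

lemma groundConfig_mem_Icc (hle : ωmin ≤ ωmax) (i : ℤ) :
    groundConfig ωmin ωmax i ∈ Finset.Icc ωmin ωmax := by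
  unfold groundConfig
  split_ifs <;> simp [hle]

lemma inOmegaGen_shift (hz : inOmegaGen ωmin ωmax z) (j : ℤ) :
    inOmegaGen ωmin ωmax (fun i => z (i + j)) := by
  obtain ⟨hbd, hneg, hpos⟩ := hz
  refine ⟨fun i => hbd (i + j), ?_, ?_⟩
  · refine ((hneg.union (Set.finite_Icc 1 j)).preimage (add_left_injective j).injOn).subset
      fun i ⟨hi, hzi⟩ => ?_
    simp only [Set.mem_preimage, Set.mem_union, Set.mem_ofPred_eq, Set.mem_Icc] at hzi ⊢
    omega
  · refine ((hpos.union (Set.finite_Icc (j + 1) 0)).preimage (add_left_injective j).injOn).subset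
      fun i ⟨hi, hzi⟩ => ?_
    simp only [Set.mem_preimage, Set.mem_union, Set.mem_ofPred_eq, Set.mem_Icc] at hzi ⊢
    omega

lemma finite_setOf_groundConfig_ne (hz : inOmegaGen ωmin ωmax z) :
    {i | groundConfig ωmin ωmax i ≠ z i}.Finite := by
  refine (hz.2.1.union hz.2.2).subset fun i hi => ?_
  by_cases h : i ≤ 0
  · exact Or.inl ⟨h, by simpa [groundConfig, h, eq_comm] using hi⟩
  · exact Or.inr ⟨by omega, by simpa [groundConfig, h, eq_comm] using hi⟩

lemma hasFiniteSupport_groundConfig_sub (hz : inOmegaGen ωmin ωmax z) :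
    (fun i => groundConfig ωmin ωmax i - z i).HasFiniteSupport :=
  (finite_setOf_groundConfig_ne hz).subset fun i hi => by simpa [sub_eq_zero] using hi

lemma hasFiniteSupport_groundConfig_sub_shift_one (ωmin ωmax : ℤ) :
    (fun i => groundConfig ωmin ωmax i - groundConfig ωmin ωmax (i + 1)).HasFiniteSupport :=
  (Set.finite_singleton 0).subset fun i hi => by
    rw [Set.mem_singleton_iff]
    simp only [Function.mem_support, groundConfig] at hi
    split_ifs at hi <;> omega

lemma Ngen_eq_finsum (hz : inOmegaGen ωmin ωmax z) :
    Ngen ωmin ωmax z = ∑ᶠ i, (groundConfig ωmin ωmax i - z i) := by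
  have hsplit := finsum_mem_add_sdiff' (Set.subset_univ {i : ℤ | 1 ≤ i})
    (by rw [Set.univ_inter]; exact hasFiniteSupport_groundConfig_sub hz)
  have hcompl : Set.univ \ {i : ℤ | 1 ≤ i} = {i | i ≤ 0} := by
    ext i
    simp only [Set.mem_sdiff, Set.mem_univ, Set.mem_ofPred_eq, true_and, not_le]
    omega
  rw [← finsum_mem_univ, ← hsplit, hcompl, Ngen, sub_eq_add_neg]
  simp only [← finsum_neg_distrib]
  congr 1
  · exact finsum_mem_congr rfl fun i (hi : 1 ≤ i) => by
      simp [groundConfig, show ¬ i ≤ 0 by omega]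
  · exact finsum_mem_congr rfl fun i (hi : i ≤ 0) => by simp [groundConfig, hi]

lemma Ngen_shift_one (hz : inOmegaGen ωmin ωmax z) :
    Ngen ωmin ωmax (fun i => z (i + 1)) = Ngen ωmin ωmax z - (ωmax - ωmin) := by
  have hstep : ∑ᶠ i, (groundConfig ωmin ωmax i - groundConfig ωmin ωmax (i + 1)) =
      ωmin - ωmax :=
    (finsum_eq_single _ 0 fun i hi => by
      simp only [groundConfig]; split_ifs <;> first | rfl | omega).trans (by simp [groundConfig])
  have hreindex : ∑ᶠ i, (groundConfig ωmin ωmax (i + 1) - z (i + 1)) =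
      ∑ᶠ i, (groundConfig ωmin ωmax i - z i) :=
    finsum_comp_equiv (Equiv.addRight (1 : ℤ)) (f := fun i => groundConfig ωmin ωmax i - z i)
  have hsplit := finsum_sub_distrib (hasFiniteSupport_groundConfig_sub (inOmegaGen_shift hz 1))
    (hasFiniteSupport_groundConfig_sub_shift_one ωmin ωmax)
  simp only [sub_sub_sub_cancel_left] at hsplit
  rw [Ngen_eq_finsum hz, Ngen_eq_finsum (inOmegaGen_shift hz 1)]
  linarith

lemma Ngen_shift (hz : inOmegaGen ωmin ωmax z) (j : ℤ) :
    Ngen ωmin ωmax (fun i => z (i + j)) = Ngen ωmin ωmax z - j * (ωmax - ωmin) := by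
  induction j using Int.induction_on with
  | zero => simp
  | succ k ih =>
    have := Ngen_shift_one (inOmegaGen_shift hz k)
    simp only [add_assoc, add_comm (1 : ℤ)] at this ⊢
    rw [this, ih]; ring
  | pred k ih =>
    have := Ngen_shift_one (inOmegaGen_shift hz (-k - 1))
    simp only [show ∀ i : ℤ, i + 1 + (-k - 1) = i + -k from fun i => by ring] at this
    rw [ih] at this; linarith

end Combinatorics

section SiteMarginal

variable {g : ℤ → ℝ} {ωmin ωmax : ℤ}

lemma sum_exp_mul_div_pos (hg : ∀ x ∈ Finset.Icc ωmin ωmax, 0 < g x) {x : ℤ}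
    (hx : x ∈ Finset.Icc ωmin ωmax) (θ : ℝ) :
    0 < ∑ y ∈ Finset.Icc ωmin ωmax, Real.exp (θ * y) / g y :=
  Finset.sum_pos (fun y hy => div_pos (Real.exp_pos _) (hg y hy)) ⟨x, hx⟩

lemma muTheta_pos (hg : ∀ x ∈ Finset.Icc ωmin ωmax, 0 < g x) {x : ℤ}
    (hx : x ∈ Finset.Icc ωmin ωmax) (θ : ℝ) : 0 < muTheta g ωmin ωmax θ x :=
  div_pos (div_pos (Real.exp_pos _) (hg x hx)) (sum_exp_mul_div_pos hg hx θ)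

lemma muTheta_div_muTheta (hg : ∀ x ∈ Finset.Icc ωmin ωmax, 0 < g x) {x s : ℤ}
    (hx : x ∈ Finset.Icc ωmin ωmax) (hs : s ∈ Finset.Icc ωmin ωmax) (θ : ℝ) :
    muTheta g ωmin ωmax θ x / muTheta g ωmin ωmax θ s = Real.exp (θ * (x - s)) * (g s / g x) := by
  have hgx := (hg x hx).ne'
  have hgs := (hg s hs).ne'
  rw [muTheta, muTheta, div_div_div_cancel_right₀ (sum_exp_mul_div_pos hg hx θ).ne', mul_sub,
    Real.exp_sub]
  field_simp

lemma inv_muTheta (hg : ∀ x ∈ Finset.Icc ωmin ωmax, 0 < g x) {x : ℤ}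
    (hx : x ∈ Finset.Icc ωmin ωmax) (θ : ℝ) :
    (muTheta g ωmin ωmax θ x)⁻¹ =
      1 + ∑ y ∈ (Finset.Icc ωmin ωmax).erase x, g x / g y * Real.exp (θ * (y - x)) := by
  have hgx := (hg x hx).ne'
  calc (muTheta g ωmin ωmax θ x)⁻¹
      = ∑ y ∈ Finset.Icc ωmin ωmax, Real.exp (θ * y) / g y * (g x / Real.exp (θ * x)) := by
        rw [muTheta, ← Finset.sum_mul, inv_div, div_div_eq_mul_div, mul_div_assoc]
    _ = ∑ y ∈ Finset.Icc ωmin ωmax, g x / g y * Real.exp (θ * (y - x)) :=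
        Finset.sum_congr rfl fun y _ => by rw [mul_sub, Real.exp_sub]; ring
    _ = _ := by rw [← Finset.add_sum_erase _ _ hx]; simp [hgx]

lemma abs_log_muTheta_le (hg : ∀ x ∈ Finset.Icc ωmin ωmax, 0 < g x) {x : ℤ}
    (hx : x ∈ Finset.Icc ωmin ωmax) (θ : ℝ) :
    |Real.log (muTheta g ωmin ωmax θ x)| ≤
      ∑ y ∈ (Finset.Icc ωmin ωmax).erase x, g x / g y * Real.exp (θ * (y - x)) := by
  rw [← abs_neg, ← Real.log_inv, inv_muTheta hg hx]
  set u := ∑ y ∈ (Finset.Icc ωmin ωmax).erase x, g x / g y * Real.exp (θ * (y - x))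
  have hu : 0 ≤ u := Finset.sum_nonneg fun y hy => mul_nonneg
    (div_nonneg (hg x hx).le (hg y (Finset.mem_of_mem_erase hy)).le) (Real.exp_pos _).le
  rw [abs_of_nonneg (Real.log_nonneg (by linarith))]
  linarith [Real.log_le_sub_one_of_pos (by linarith : 0 < 1 + u)]

lemma summable_log_muTheta_nat (hg : ∀ x ∈ Finset.Icc ωmin ωmax, 0 < g x) {x : ℤ}
    (hx : x ∈ Finset.Icc ωmin ωmax) {b : ℝ}
    (hb : ∀ y ∈ Finset.Icc ωmin ωmax, y ≠ x → b * (y - x) < 0) (c : ℝ) :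
    Summable fun n : ℕ => Real.log (muTheta g ωmin ωmax (c + n * b) x) := by
  refine Summable.of_norm_bounded (summable_sum fun y hy => ?_)
    fun n => abs_log_muTheta_le hg hx (c + n * b)
  obtain ⟨hyx, hy⟩ := Finset.mem_erase.mp hy
  refine ((Real.summable_exp_nat_mul_iff.mpr (hb y hy hyx)).mul_left
    (g x / g y * Real.exp (c * (y - x)))).congr fun n => ?_
  rw [mul_assoc, ← Real.exp_add]
  ring_nf

lemma summable_log_muTheta_groundConfig (hg : ∀ x ∈ Finset.Icc ωmin ωmax, 0 < g x)
    (hle : ωmin ≤ ωmax) {δ : ℝ} (hδ : 0 < δ) (c : ℝ) :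
    Summable fun i : ℤ =>
      Real.log (muTheta g ωmin ωmax (c + i * δ) (groundConfig ωmin ωmax i)) := by
  have hmax : ωmax ∈ Finset.Icc ωmin ωmax := Finset.mem_Icc.mpr ⟨hle, le_rfl⟩
  have hmin : ωmin ∈ Finset.Icc ωmin ωmax := Finset.mem_Icc.mpr ⟨le_rfl, hle⟩
  -- site `0` carries `ω^min`, so the `ω^max` half starts at `n + 1`
  refine Summable.of_nat_of_neg ((summable_nat_add_iff 1).mp ?_) ?_
  · refine (summable_log_muTheta_nat hg hmax (b := δ) (fun y hy hyx => ?_) (c + δ)).congr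
      fun n => ?_
    · have : (y : ℝ) < ωmax := by exact_mod_cast lt_of_le_of_ne (Finset.mem_Icc.mp hy).2 hyx
      nlinarith
    · simp only [groundConfig, if_neg (by omega : ¬ ((n + 1 : ℕ) : ℤ) ≤ 0)]
      push_cast; ring_nf
  · refine (summable_log_muTheta_nat hg hmin (b := -δ) (fun y hy hyx => ?_) c).congr
      fun n => ?_
    · have : (ωmin : ℝ) < y := by
        exact_mod_cast lt_of_le_of_ne (Finset.mem_Icc.mp hy).1 (Ne.symm hyx)
      nlinarith
    · simp only [groundConfig, if_pos (by omega : -(n : ℤ) ≤ 0)]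
      push_cast; ring_nf

lemma hasProd_muTheta_groundConfig (hg : ∀ x ∈ Finset.Icc ωmin ωmax, 0 < g x)
    (hle : ωmin ≤ ωmax) {δ : ℝ} (hδ : 0 < δ) (c : ℝ) :
    HasProd (fun i : ℤ => muTheta g ωmin ωmax (c + i * δ) (groundConfig ωmin ωmax i))
      (Real.exp (∑' i : ℤ,
        Real.log (muTheta g ωmin ωmax (c + i * δ) (groundConfig ωmin ωmax i)))) :=
  Real.hasProd_of_hasSum_log (fun i => muTheta_pos hg (groundConfig_mem_Icc hle i) _)
    (summable_log_muTheta_groundConfig hg hle hδ c).hasSum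

end SiteMarginal

section BlockingMeasure

variable {g : ℤ → ℝ} {ωmin ωmax : ℤ} {p : ℝ}

lemma muC_shift (c : ℝ) (j : ℤ) (z : ℤ → ℤ) :
    muC g ωmin ωmax p c (fun i => z (i + j)) =
      muC g ωmin ωmax p (c - j * Real.log (p / (1 - p))) z := by
  rw [muC, muC]
  conv_rhs => rw [← (Equiv.addRight j).tprod_eq]
  refine tprod_congr fun i => ?_
  simp only [Equiv.coe_addRight, Int.cast_add]
  ring_nf

lemma muC_groundConfig_pos (hg : ∀ x ∈ Finset.Icc ωmin ωmax, 0 < g x) (hle : ωmin ≤ ωmax)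
    (hδ : 0 < Real.log (p / (1 - p))) (c : ℝ) :
    0 < muC g ωmin ωmax p c (groundConfig ωmin ωmax) := by
  rw [muC, (hasProd_muTheta_groundConfig hg hle hδ c).tprod_eq]
  exact Real.exp_pos _

lemma muC_eq_muC_groundConfig_mul_prod (hg : ∀ x ∈ Finset.Icc ωmin ωmax, 0 < g x)
    (hδ : 0 < Real.log (p / (1 - p))) (c : ℝ) {z : ℤ → ℤ}
    (hzIcc : ∀ i, z i ∈ Finset.Icc ωmin ωmax) {D : Finset ℤ}
    (hD : ∀ i ∉ D, z i = groundConfig ωmin ωmax i) :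
    muC g ωmin ωmax p c z = muC g ωmin ωmax p c (groundConfig ωmin ωmax) *
      ∏ i ∈ D, muTheta g ωmin ωmax (c + i * Real.log (p / (1 - p))) (z i) /
        muTheta g ωmin ωmax (c + i * Real.log (p / (1 - p))) (groundConfig ωmin ωmax i) := by
  have hle : ωmin ≤ ωmax := (Finset.mem_Icc.mp (hzIcc 0)).1.trans (Finset.mem_Icc.mp (hzIcc 0)).2
  have hground := hasProd_muTheta_groundConfig hg hle hδ c
  have hquot := hasProd_prod_of_ne_finset_one (L := .unconditional ℤ) (s := D) (f := fun i : ℤ =>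
    muTheta g ωmin ωmax (c + i * Real.log (p / (1 - p))) (z i) /
      muTheta g ωmin ωmax (c + i * Real.log (p / (1 - p))) (groundConfig ωmin ωmax i))
    fun i hi => by
      rw [hD i hi]
      exact div_self (muTheta_pos hg (hD i hi ▸ hzIcc i) _).ne'
  rw [muC, muC, hground.tprod_eq]
  refine ((hground.mul hquot).congr_fun fun i => ?_).tprod_eq
  exact (mul_div_cancel₀ _ (muTheta_pos hg (groundConfig_mem_Icc hle i) _).ne').symm

lemma muC_eq_mul_muC (hg : ∀ x ∈ Finset.Icc ωmin ωmax, 0 < g x)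
    (hδ : 0 < Real.log (p / (1 - p))) {z : ℤ → ℤ} (hz : inOmegaGen ωmin ωmax z) (c c' : ℝ) :
    muC g ωmin ωmax p c' z =
      muC g ωmin ωmax p c' (groundConfig ωmin ωmax) /
          muC g ωmin ωmax p c (groundConfig ωmin ωmax) * Real.exp ((c - c') * Ngen ωmin ωmax z) *
        muC g ωmin ωmax p c z := by
  have hzIcc : ∀ i, z i ∈ Finset.Icc ωmin ωmax := fun i => Finset.mem_Icc.mpr (hz.1 i)
  have hle : ωmin ≤ ωmax := (hz.1 0).1.trans (hz.1 0).2
  set D := (finite_setOf_groundConfig_ne hz).toFinset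
  have hD : ∀ i ∉ D, z i = groundConfig ωmin ωmax i := fun i hi => by
    simpa [D, eq_comm] using hi
  have hsum : ∑ i ∈ D, ((z i : ℝ) - groundConfig ωmin ωmax i) = -Ngen ωmin ωmax z := by
    rw [Ngen_eq_finsum hz, finsum_eq_sum_of_support_subset (s := D) _ fun i hi => by
      simpa [D, sub_eq_zero] using hi]
    push_cast
    rw [← Finset.sum_neg_distrib]
    exact Finset.sum_congr rfl fun i _ => by ring
  have hratio : ∀ i ∈ D,
      muTheta g ωmin ωmax (c' + i * Real.log (p / (1 - p))) (z i) /
          muTheta g ωmin ωmax (c' + i * Real.log (p / (1 - p))) (groundConfig ωmin ωmax i) =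
        Real.exp ((c' - c) * (z i - groundConfig ωmin ωmax i)) *
          (muTheta g ωmin ωmax (c + i * Real.log (p / (1 - p))) (z i) /
            muTheta g ωmin ωmax (c + i * Real.log (p / (1 - p))) (groundConfig ωmin ωmax i)) :=
      fun i _ => by
    rw [muTheta_div_muTheta hg (hzIcc i) (groundConfig_mem_Icc hle i),
      muTheta_div_muTheta hg (hzIcc i) (groundConfig_mem_Icc hle i), ← mul_assoc, ← Real.exp_add]
    ring_nf
  have hpos := (muC_groundConfig_pos hg hle hδ c).ne'
  rw [muC_eq_muC_groundConfig_mul_prod hg hδ c' hzIcc hD,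
    muC_eq_muC_groundConfig_mul_prod hg hδ c hzIcc hD, Finset.prod_congr rfl hratio,
    Finset.prod_mul_distrib, ← Real.exp_sum, ← Finset.mul_sum, hsum,
    show (c' - c) * -(Ngen ωmin ωmax z : ℝ) = (c - c') * Ngen ωmin ωmax z by ring,
    div_mul_eq_mul_div, div_mul_eq_mul_div, eq_div_iff hpos]
  ring

end BlockingMeasure

section Sectors

variable {ωmin ωmax : ℤ}

lemma inOmegaGen_shift_iff {z : ℤ → ℤ} {j : ℤ} :
    inOmegaGen ωmin ωmax (fun i => z (i + j)) ↔ inOmegaGen ωmin ωmax z :=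
  ⟨fun h => by simpa using inOmegaGen_shift h (-j), fun h => inOmegaGen_shift h j⟩

lemma tsum_sector_shift {α : Type*} [AddCommMonoid α] [TopologicalSpace α]
    (f : (ℤ → ℤ) → α) (n j : ℤ) :
    ∑' x : {x : ℤ → ℤ // inOmegaGen ωmin ωmax x ∧ Ngen ωmin ωmax x = n - j * (ωmax - ωmin)},
        f x.1 =
      ∑' x : {x : ℤ → ℤ // inOmegaGen ωmin ωmax x ∧ Ngen ωmin ωmax x = n},
        f (fun i => x.1 (i + j)) := by
  refine (Equiv.tsum_eq (Equiv.subtypeEquiv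
    (Equiv.arrowCongr (Equiv.addRight j).symm (Equiv.refl ℤ)) fun x => ?_) (f ·.1)).symm
  change _ ↔ inOmegaGen ωmin ωmax (fun i => x (i + j)) ∧ Ngen ωmin ωmax (fun i => x (i + j)) = _
  rw [inOmegaGen_shift_iff]
  refine and_congr_right fun hx => ?_
  rw [Ngen_shift hx]
  omega

end Sectors

theorem conditioned_blocking_measure_shift_invariant_general (p : ℝ) (hp : 1 / 2 < p) (hp1 : p < 1)
    (ωmin ωmax : ℤ) (g : ℤ → ℝ)
    (hg : ∀ x ∈ Finset.Icc ωmin ωmax, 0 < g x) (c : ℝ) (n j : ℤ) (z : ℤ → ℤ)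
    (hz : inOmegaGen ωmin ωmax z) (hn : Ngen ωmin ωmax z = n) :
    inOmegaGen ωmin ωmax (fun i => z (i + j)) ∧
    Ngen ωmin ωmax (fun i => z (i + j)) = n - j * (ωmax - ωmin) ∧
    muC g ωmin ωmax p c (fun i => z (i + j)) /
        (∑' x : {x : ℤ → ℤ //
            inOmegaGen ωmin ωmax x ∧ Ngen ωmin ωmax x = n - j * (ωmax - ωmin)},
          muC g ωmin ωmax p c x.1) =
      muC g ωmin ωmax p c z /
        ∑' x : {x : ℤ → ℤ // inOmegaGen ωmin ωmax x ∧ Ngen ωmin ωmax x = n},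
          muC g ωmin ωmax p c x.1 := by
  refine ⟨inOmegaGen_shift hz j, by rw [Ngen_shift hz j, hn], ?_⟩
  have hδ : 0 < Real.log (p / (1 - p)) :=
    Real.log_pos ((one_lt_div (by linarith)).mpr (by linarith))
  have hle : ωmin ≤ ωmax := (hz.1 0).1.trans (hz.1 0).2
  set c' := c - j * Real.log (p / (1 - p))
  set A := muC g ωmin ωmax p c' (groundConfig ωmin ωmax) /
    muC g ωmin ωmax p c (groundConfig ωmin ωmax) * Real.exp ((c - c') * n)
  have hA : A ≠ 0 := by
    have := muC_groundConfig_pos hg hle hδ c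
    have := muC_groundConfig_pos hg hle hδ c'
    positivity
  have hsector : ∀ x : {x : ℤ → ℤ // inOmegaGen ωmin ωmax x ∧ Ngen ωmin ωmax x = n},
      muC g ωmin ωmax p c (fun i => x.1 (i + j)) = A * muC g ωmin ωmax p c x.1 := fun x => by
    rw [muC_shift, muC_eq_mul_muC hg hδ x.2.1 c c', x.2.2]
  rw [tsum_sector_shift, tsum_congr hsector, tsum_mul_left, muC_shift,
    muC_eq_mul_muC hg hδ hz c c', hn, mul_div_mul_left _ _ hA]

/-- Shift invariance of the conditioned blocking measures (Corollary 5.5): for every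
`n, j ∈ ℤ` and every `z ∈ Ω` with `N(z) = n`, the shifted configuration `τ^j z` lies in
`Ω` with `N(τ^j z) = n - j (ω^max - ω^min)`, and
`ν^{n - j(ω^max - ω^min)}(τ^j z) = ν^n(z)`, where
`ν^m(y) = μ^c(y) / ∑_{x : N(x) = m} μ^c(x)`. -/
theorem conditioned_blocking_measure_shift_invariant (p : ℝ) (hp : 1 / 2 < p) (hp1 : p < 1)
    (ωmin ωmax : ℤ) (hω : ωmin < ωmax) (g : ℤ → ℝ)
    (hg : ∀ x ∈ Finset.Icc ωmin ωmax, 0 < g x) (c : ℝ) (n j : ℤ) (z : ℤ → ℤ)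
    (hz : inOmegaGen ωmin ωmax z) (hn : Ngen ωmin ωmax z = n) :
    inOmegaGen ωmin ωmax (fun i => z (i + j)) ∧
    Ngen ωmin ωmax (fun i => z (i + j)) = n - j * (ωmax - ωmin) ∧
    muC g ωmin ωmax p c (fun i => z (i + j)) /
        (∑' x : {x : ℤ → ℤ //
            inOmegaGen ωmin ωmax x ∧ Ngen ωmin ωmax x = n - j * (ωmax - ωmin)},
          muC g ωmin ωmax p c x.1) =
      muC g ωmin ωmax p c z /
        ∑' x : {x : ℤ → ℤ // inOmegaGen ωmin ωmax x ∧ Ngen ωmin ωmax x = n},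
          muC g ωmin ωmax p c x.1 :=
  conditioned_blocking_measure_shift_invariant_general p hp hp1 ωmin ωmax g hg c n j z hz hn
end
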